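/- The complete set of complex solutions (t, x, y) of the polynomial system {2 − x²t² + x³t²y = 0; t²x − 2y − t²x²y + xy² = 0; −y + xy² + 2x − x²y = 0; y⁴ + 2 + y² − xy³ = 0; (2 + t² + t⁴)x − t²y = 0; t⁴x + (2 − t²)y = 0} consists of exactly the 8 triples with t ∈ {1+i, 1−i, −1+i, −1−i}, y = ±t, and x = (2 − t²)y/4; in particular all solutions satisfy t⁴ = −4. -/
import Mathlib


open Complex

private lemma borromean_t4 (t x y : ℂ)
    (h1 : 2 - x ^ 2 * t ^ 2 + x ^ 3 * t ^ 2 * y = 0)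
    (h5 : (2 + t ^ 2 + t ^ 4) * x - t ^ 2 * y = 0)
    (h6 : t ^ 4 * x + (2 - t ^ 2) * y = 0) : t ^ 4 = -4 := by
  by_contra h
  have hd : t ^ 4 + 4 ≠ 0 := fun hc => h (by linear_combination hc)
  have hx : x = 0 := by
    have hz : (t ^ 4 + 4) * x = 0 := by linear_combination (2 - t ^ 2) * h5 + t ^ 2 * h6
    exact (mul_eq_zero.mp hz).resolve_left hd
  have hy : y = 0 := by
    have hz : (t ^ 4 + 4) * y = 0 := by
      linear_combination (2 + t ^ 2 + t ^ 4) * h6 - t ^ 4 * h5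
    exact (mul_eq_zero.mp hz).resolve_left hd
  rw [hx, hy] at h1
  norm_num at h1

/-- The complete set of complex solutions of the polynomial system
arising from coloring the Borromean rings consists exactly of the 8 triples with
`t ∈ {1+i, 1−i, −1+i, −1−i}`, `y = ±t`, `x = (2 − t²)y/4`; in particular every
solution satisfies `t⁴ = −4`. -/
theorem borromean_system_solutions :
    (∀ t x y : ℂ,
      (2 - x ^ 2 * t ^ 2 + x ^ 3 * t ^ 2 * y = 0 ∧
       t ^ 2 * x - 2 * y - t ^ 2 * x ^ 2 * y + x * y ^ 2 = 0 ∧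
       -y + x * y ^ 2 + 2 * x - x ^ 2 * y = 0 ∧
       y ^ 4 + 2 + y ^ 2 - x * y ^ 3 = 0 ∧
       (2 + t ^ 2 + t ^ 4) * x - t ^ 2 * y = 0 ∧
       t ^ 4 * x + (2 - t ^ 2) * y = 0) ↔
      ((t = 1 + I ∨ t = 1 - I ∨ t = -1 + I ∨ t = -1 - I) ∧
       (y = t ∨ y = -t) ∧
       x = (2 - t ^ 2) * y / 4)) ∧
    (∀ t x y : ℂ,
      (2 - x ^ 2 * t ^ 2 + x ^ 3 * t ^ 2 * y = 0 ∧
       t ^ 2 * x - 2 * y - t ^ 2 * x ^ 2 * y + x * y ^ 2 = 0 ∧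
       -y + x * y ^ 2 + 2 * x - x ^ 2 * y = 0 ∧
       y ^ 4 + 2 + y ^ 2 - x * y ^ 3 = 0 ∧
       (2 + t ^ 2 + t ^ 4) * x - t ^ 2 * y = 0 ∧
       t ^ 4 * x + (2 - t ^ 2) * y = 0) →
      t ^ 4 = -4) := by
  constructor
  · intro t x y
    constructor
    · rintro ⟨h1, h2, h3, h4, h5, h6⟩
      have ht4 : t ^ 4 = -4 := borromean_t4 t x y h1 h5 h6
      have hx : x = (2 - t ^ 2) * y / 4 := by
        linear_combination (-1/4 : ℂ) * h6 + (x / 4) * ht4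
      subst hx
      have hy0 : y ≠ 0 := by
        intro h
        rw [h] at h1
        norm_num at h1
      have hy2 : y ^ 2 = t ^ 2 := by
        have h8 : y * (y ^ 2 - t ^ 2) = 0 := by
          linear_combination 2 * h3 + (y ^ 3 / 8) * ht4
        have := (mul_eq_zero.mp h8).resolve_left hy0
        linear_combination this
      have ht2 : t ^ 2 = 2 * I ∨ t ^ 2 = -2 * I := by
        have hz : (t ^ 2 - 2 * I) * (t ^ 2 + 2 * I) = 0 := by
          linear_combination ht4 - 4 * Complex.I_sq
        rcases mul_eq_zero.mp hz with h | h
        · exact Or.inl (by linear_combination h)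
        · exact Or.inr (by linear_combination h)
      refine ⟨?_, ?_, rfl⟩
      · rcases ht2 with h | h
        · have hz : (t - (1 + I)) * (t + (1 + I)) = 0 := by
            linear_combination h - Complex.I_sq
          rcases mul_eq_zero.mp hz with h' | h'
          · exact Or.inl (by linear_combination h')
          · exact Or.inr (Or.inr (Or.inr (by linear_combination h')))
        · have hz : (t - (1 - I)) * (t + (1 - I)) = 0 := by
            linear_combination h - Complex.I_sq
          rcases mul_eq_zero.mp hz with h' | h'
          · exact Or.inr (Or.inl (by linear_combination h'))
          · exact Or.inr (Or.inr (Or.inl (by linear_combination h')))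
      · have hz : (y - t) * (y + t) = 0 := by linear_combination hy2
        rcases mul_eq_zero.mp hz with h' | h'
        · exact Or.inl (by linear_combination h')
        · exact Or.inr (by linear_combination h')
    · rintro ⟨ht, hy, hx⟩
      subst hx
      have ht2 : t ^ 2 = 2 * I ∨ t ^ 2 = -2 * I := by
        rcases ht with h | h | h | h <;> subst h
        · exact Or.inl (by linear_combination Complex.I_sq)
        · exact Or.inr (by linear_combination Complex.I_sq)
        · exact Or.inr (by linear_combination Complex.I_sq)
        · exact Or.inl (by linear_combination Complex.I_sq)
      have ht4 : t ^ 4 = -4 := by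
        rcases ht2 with h | h
        · linear_combination (t ^ 2 + 2 * I) * h + 4 * Complex.I_sq
        · linear_combination (t ^ 2 - 2 * I) * h + 4 * Complex.I_sq
      have hy2 : y ^ 2 = t ^ 2 := by
        rcases hy with h | h <;> subst h <;> ring
      refine ⟨?_, ?_, ?_, ?_, ?_, ?_⟩
      · linear_combination
          (-1/4 * t ^ 2 + 1/8 * t ^ 2 * y ^ 2 + 3/8 * t ^ 4 - 3/16 * t ^ 4 * y ^ 2
            - 1/4 * t ^ 6 + 3/32 * t ^ 6 * y ^ 2 + 3/32 * t ^ 8 - 1/64 * t ^ 8 * y ^ 2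
            - 1/64 * t ^ 10) * hy2
          + (1/2 - 3/16 * t ^ 4 + 3/32 * t ^ 6 - 1/64 * t ^ 8) * ht4
      · linear_combination
          (1/2 * y - 1/2 * t ^ 2 * y + 1/4 * t ^ 4 * y - 1/16 * t ^ 6 * y) * hy2
          + (-1/2 * y + 1/4 * t ^ 2 * y - 1/16 * t ^ 4 * y) * ht4
      · linear_combination (1/4 * y - 1/16 * t ^ 4 * y) * hy2 + (-1/16 * t ^ 2 * y) * ht4
      · linear_combination
          (1 + 1/2 * y ^ 2 + 1/2 * t ^ 2 + 1/4 * t ^ 2 * y ^ 2 + 1/4 * t ^ 4) * hy2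
          + (1/2 + 1/4 * t ^ 2) * ht4
      · linear_combination (1/4 * y - 1/4 * t ^ 2 * y) * ht4
      · linear_combination (1/2 * y - 1/4 * t ^ 2 * y) * ht4
  · rintro t x y ⟨h1, _, _, _, h5, h6⟩
    exact borromean_t4 t x y h1 h5 h6
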